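/- arXiv:2205.11637 — 5 statements merged into one kernel-verified Lean document; each statement's English description precedes it below -/
import Mathlib

section
/- Let ABC be a triangle with angles α<β<γ and γ>90° (obtuse). Then (a²·sin γ)/2 < (c²·tan α)/4, where a and c are the sides opposite α and γ. Equivalently, sin²α·sin γ /2 < sin α·sin²γ/(4 cos α). -/
open Real

theorem stmt_3 (a c α β γ : ℝ) (ha : 0 < a) (hc : 0 < c)
    (hα : 0 < α) (hαβ : α < β) (hβγ : β < γ) (hsum : α + β + γ = π)
    (hobtuse : π / 2 < γ)
    (hlos : a / Real.sin α = c / Real.sin γ) :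
    a ^ 2 * Real.sin γ / 2 < c ^ 2 * Real.tan α / 4 := by
  have hab : α + β < π / 2 := by linarith
  have hα2 : α < π / 2 := by linarith
  have hγπ : γ < π := by linarith
  have hsα : 0 < Real.sin α := Real.sin_pos_of_pos_of_lt_pi hα (by linarith [Real.pi_pos])
  have hsγ : 0 < Real.sin γ := Real.sin_pos_of_pos_of_lt_pi (by linarith) hγπ
  have hcα : 0 < Real.cos α := Real.cos_pos_of_mem_Ioo ⟨by linarith, hα2⟩
  have hkey : Real.sin (2 * α) < Real.sin γ := by
    have h1 : Real.sin (2 * α) < Real.sin (α + β) := by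
      apply Real.strictMonoOn_sin ⟨by linarith, by linarith⟩ ⟨by linarith, by linarith⟩
      linarith
    have h2 : Real.sin (α + β) = Real.sin γ := by
      rw [show α + β = π - γ by linarith, Real.sin_pi_sub]
    linarith
  rw [Real.sin_two_mul] at hkey
  have haeq : a = c * Real.sin α / Real.sin γ := by
    field_simp at hlos
    field_simp
    linarith [hlos]
  rw [haeq, Real.tan_eq_sin_div_cos]
  have h1 : ((c * Real.sin α / Real.sin γ) ^ 2 * Real.sin γ / 2) =
      c ^ 2 * Real.sin α ^ 2 / (2 * Real.sin γ) := by
    field_simp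
  have h2 : (c ^ 2 * (Real.sin α / Real.cos α) / 4) =
      c ^ 2 * Real.sin α / (4 * Real.cos α) := by
    field_simp
  rw [h1, h2, div_lt_div_iff₀ (by positivity) (by positivity)]
  nlinarith [mul_pos (mul_pos (mul_pos hc hc) hsα) hsγ]
end

section
/- Let ABC be an acute triangle with angles α<β<γ<90° and sides a<b<c. Then 2c(1+sin(α/2)) < a(1 + 1/cos γ); that is, the perimeter of the isosceles container ABC' is strictly less than that of ĀBC. -/
open Real

lemma stmt_8_key {x y : ℝ} (hx : 0 < x) (hxy : x < y) (hy : y < π / 6) :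
    (1 + Real.sin y) * Real.sin (2 * x) < (1 + Real.sin x) * Real.sin (2 * y) := by
  have hpi : (0:ℝ) < π := Real.pi_pos
  have hy2 : y < π / 2 := by linarith
  -- basic positivity
  have hsx : 0 < Real.sin x := Real.sin_pos_of_pos_of_lt_pi hx (by linarith)
  have hsy : 0 < Real.sin y := Real.sin_pos_of_pos_of_lt_pi (by linarith) (by linarith)
  have hd : 0 < Real.sin (y - x) := Real.sin_pos_of_pos_of_lt_pi (by linarith) (by linarith)
  -- sin y < 1/2, sin x < 1/2
  have hmono : StrictMonoOn Real.sin (Set.Icc (-(π/2)) (π/2)) := Real.strictMonoOn_sin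
  have hsy_lt : Real.sin y < 1 / 2 := by
    have := hmono (by constructor <;> [linarith; linarith]) (by constructor <;> [linarith; linarith]) hy
    rwa [Real.sin_pi_div_six] at this
  have hsx_lt : Real.sin x < 1 / 2 := by
    have := hmono (by constructor <;> [linarith; linarith]) (by constructor <;> [linarith; linarith])
      (show x < π/6 by linarith)
    rwa [Real.sin_pi_div_six] at this
  -- cos (x+y) > 1/2
  have hC : 1 / 2 < Real.cos (x + y) := by
    have : Real.cos (x + y) > Real.cos (π / 3) := by
      apply Real.cos_lt_cos_of_nonneg_of_le_pi (by linarith) (by linarith) (by linarith)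
    rwa [Real.cos_pi_div_three] at this
  -- sin((x+y)/2) < 1/2
  have hsu : Real.sin ((x + y) / 2) < 1 / 2 := by
    have := hmono (by constructor <;> [linarith; linarith]) (by constructor <;> [linarith; linarith])
      (show (x + y) / 2 < π/6 by linarith)
    rwa [Real.sin_pi_div_six] at this
  have hsu0 : 0 < Real.sin ((x + y) / 2) :=
    Real.sin_pos_of_pos_of_lt_pi (by linarith) (by linarith)
  -- sin((y-x)/2) ≤ sin(y-x)
  have hsv : Real.sin ((y - x) / 2) ≤ Real.sin (y - x) := by
    apply (hmono.monotoneOn) (by constructor <;> [linarith; linarith])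
      (by constructor <;> [linarith; linarith]) (by linarith)
  have hsv0 : 0 < Real.sin ((y - x) / 2) :=
    Real.sin_pos_of_pos_of_lt_pi (by linarith) (by linarith)
  -- cos x - cos y = 2 sin((x+y)/2) sin((y-x)/2)
  have hcc : Real.cos x - Real.cos y =
      2 * Real.sin ((x + y) / 2) * Real.sin ((y - x) / 2) := by
    rw [Real.cos_sub_cos]
    have : Real.sin ((x - y) / 2) = -Real.sin ((y - x) / 2) := by
      rw [← Real.sin_neg]; ring_nf
    rw [this]; ring
  -- cos x - cos y < sin (y - x)
  have hkey1 : Real.cos x - Real.cos y < Real.sin (y - x) := by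
    rw [hcc]
    nlinarith [hsv0, hsu, hsv]
  have hccpos : 0 < Real.cos x - Real.cos y := by
    rw [hcc]; positivity
  -- sin 2y - sin 2x = 2 sin(y-x) cos(y+x)
  have hss : Real.sin (2 * y) - Real.sin (2 * x) =
      2 * Real.sin (y - x) * Real.cos (x + y) := by
    rw [Real.sin_sub_sin]
    ring_nf
  -- sin x sin 2y - sin y sin 2x = -2 sin x sin y (cos x - cos y)
  have hprod : Real.sin x * Real.sin (2 * y) - Real.sin y * Real.sin (2 * x) =
      -(2 * Real.sin x * Real.sin y * (Real.cos x - Real.cos y)) := by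
    rw [Real.sin_two_mul, Real.sin_two_mul]; ring
  have hxy4 : Real.sin x * Real.sin y < 1 / 4 := by nlinarith
  have hA : (Real.sin x * Real.sin y) * (Real.cos x - Real.cos y) <
      (Real.sin x * Real.sin y) * Real.sin (y - x) :=
    mul_lt_mul_of_pos_left hkey1 (mul_pos hsx hsy)
  have hB : (Real.sin x * Real.sin y) * Real.sin (y - x) < (1 / 4) * Real.sin (y - x) :=
    mul_lt_mul_of_pos_right hxy4 hd
  have hCc : (1 / 2) * Real.sin (y - x) < Real.cos (x + y) * Real.sin (y - x) :=
    mul_lt_mul_of_pos_right hC hd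
  nlinarith [hss, hprod, hA, hB, hCc, hd]

theorem stmt_8 (a b c α β γ : ℝ) (ha : 0 < a) (hab : a < b) (hbc : b < c)
    (hα : 0 < α) (hαβ : α < β) (hβγ : β < γ) (hsum : α + β + γ = π)
    (hacute : γ < π / 2)
    (hlos : a / Real.sin α = c / Real.sin γ) :
    2 * c * (1 + Real.sin (α / 2)) < a * (1 + 1 / Real.cos γ) := by
  have hpi : (0:ℝ) < π := Real.pi_pos
  have hγ : 0 < γ := by linarith
  have hc : 0 < c := by linarith
  have hsinα : 0 < Real.sin α := Real.sin_pos_of_pos_of_lt_pi hα (by linarith)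
  have hsinγ : 0 < Real.sin γ := Real.sin_pos_of_pos_of_lt_pi hγ (by linarith)
  have hcosγ : 0 < Real.cos γ := Real.cos_pos_of_mem_Ioo ⟨by linarith, hacute⟩
  have hlos' : a * Real.sin γ = c * Real.sin α := by
    field_simp at hlos; linarith
  -- apply the key lemma with x = π/2 - γ, y = α/2
  have hx : 0 < π / 2 - γ := by linarith
  have hxy : π / 2 - γ < α / 2 := by linarith
  have hy : α / 2 < π / 6 := by linarith
  have K := stmt_8_key hx hxy hy
  rw [Real.sin_pi_div_two_sub] at K
  have h2x : Real.sin (2 * (π / 2 - γ)) = Real.sin γ * 2 * Real.cos γ := by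
    have : 2 * (π / 2 - γ) = π - 2 * γ := by ring
    rw [this, Real.sin_pi_sub, Real.sin_two_mul]; ring
  have h2y : Real.sin (2 * (α / 2)) = Real.sin α := by ring_nf
  rw [h2x, h2y] at K
  -- K : (1 + sin (α/2)) * (sin γ * 2 * cos γ) < (1 + cos γ) * sin α
  have target' : 2 * c * (1 + Real.sin (α / 2)) * Real.cos γ < a * (Real.cos γ + 1) := by
    have hmul := mul_lt_mul_of_pos_left K ha
    -- a * ((1+s) * (sinγ * 2 * cosγ)) < a * ((1+cosγ) * sinα)
    -- lhs = 2*(1+s)*cosγ * (a*sinγ) = 2*(1+s)*cosγ * (c*sinα)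
    have h1 : a * ((1 + Real.sin (α / 2)) * (Real.sin γ * 2 * Real.cos γ)) =
        (2 * c * (1 + Real.sin (α / 2)) * Real.cos γ) * Real.sin α := by
      have : a * ((1 + Real.sin (α / 2)) * (Real.sin γ * 2 * Real.cos γ)) =
          (2 * (1 + Real.sin (α / 2)) * Real.cos γ) * (a * Real.sin γ) := by ring
      rw [this, hlos']; ring
    rw [h1] at hmul
    have h2 : a * ((1 + Real.cos γ) * Real.sin α) = (a * (Real.cos γ + 1)) * Real.sin α := by ring
    rw [h2] at hmul
    exact lt_of_mul_lt_mul_right hmul hsinα.le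
  calc 2 * c * (1 + Real.sin (α / 2))
      = (2 * c * (1 + Real.sin (α / 2)) * Real.cos γ) / Real.cos γ := by
        field_simp
    _ < (a * (Real.cos γ + 1)) / Real.cos γ := by gcongr
    _ = a * (1 + 1 / Real.cos γ) := by field_simp
end

section
/- For fixed m>0, the function p(γ) = m(2/sin γ + 1/cos(γ/2)) on (0°, 180°) has a unique minimum, attained at γ* = 4·arctan((1 + √5 − √(2(1+√5)))/2) ≈ 76.3466°. Moreover p is strictly decreasing on (0°, γ*] and strictly increasing on [γ*, 180°). -/
open Real

lemma key_gamma :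
    4 * Real.arctan ((1 + Real.sqrt 5 - Real.sqrt (2 * (1 + Real.sqrt 5))) / 2)
      = 2 * Real.arcsin ((Real.sqrt 5 - 1) / 2) := by
  set a := Real.sqrt 5 with ha_def
  have ha2 : a ^ 2 = 5 := Real.sq_sqrt (by norm_num)
  have ha0 : 0 ≤ a := Real.sqrt_nonneg 5
  have ha1 : 1 < a := by nlinarith
  set b := Real.sqrt (2 * (1 + a)) with hb_def
  have hb2 : b ^ 2 = 2 * (1 + a) := Real.sq_sqrt (by linarith)
  have hb0 : 0 ≤ b := Real.sqrt_nonneg _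
  set u := (1 + a - b) / 2 with hu_def
  have hu0 : 0 < u := by
    have : b < 1 + a := by
      rw [hb_def]
      exact (Real.sqrt_lt' (by linarith)).mpr (by nlinarith)
    simp only [hu_def]; linarith
  have hu1 : u < 1 := by
    have : a - 1 < b := by
      rw [hb_def]
      exact (Real.lt_sqrt (by linarith)).mpr (by nlinarith)
    simp only [hu_def]; linarith
  have hsin : Real.sin (2 * Real.arctan u) = (a - 1) / 2 := by
    rw [Real.sin_two_mul, Real.sin_arctan, Real.cos_arctan]
    have h1 : (0:ℝ) < 1 + u ^ 2 := by positivity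
    have hs : Real.sqrt (1 + u ^ 2) * Real.sqrt (1 + u ^ 2) = 1 + u ^ 2 :=
      Real.mul_self_sqrt h1.le
    have hsne : Real.sqrt (1 + u ^ 2) ≠ 0 := by positivity
    field_simp
    nlinarith [hs, sq_nonneg (a - 1), sq_nonneg b]
  have hat0 : 0 < Real.arctan u := by simpa using Real.arctan_strictMono hu0
  have hat1 : Real.arctan u < π / 4 := by
    calc Real.arctan u < Real.arctan 1 := Real.arctan_strictMono hu1
    _ = π / 4 := Real.arctan_one
  have h2 : Real.arcsin (Real.sin (2 * Real.arctan u)) = 2 * Real.arctan u :=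
    Real.arcsin_sin (by nlinarith [Real.pi_pos]) (by linarith)
  rw [hsin] at h2
  have : (a - 1) / 2 = (Real.sqrt 5 - 1) / 2 := by rw [ha_def]
  rw [← this, h2]
  ring

theorem stmt_9 (m : ℝ) (hm : 0 < m)
    (p : ℝ → ℝ) (hp : ∀ γ, p γ = m * (2 / Real.sin γ + 1 / Real.cos (γ / 2)))
    (γstar : ℝ)
    (hγstar : γstar = 4 * Real.arctan ((1 + Real.sqrt 5 - Real.sqrt (2 * (1 + Real.sqrt 5))) / 2)) :
    StrictAntiOn p (Set.Ioc 0 γstar) ∧ StrictMonoOn p (Set.Ico γstar π) ∧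
    ∀ γ ∈ Set.Ioo (0 : ℝ) π, γ ≠ γstar → p γstar < p γ := by
  have hpf : p = fun γ => m * (2 / Real.sin γ + 1 / Real.cos (γ / 2)) := funext hp
  set φ : ℝ := (Real.sqrt 5 - 1) / 2 with hφ_def
  have ha2 : (Real.sqrt 5) ^ 2 = 5 := Real.sq_sqrt (by norm_num)
  have ha0 : 0 ≤ Real.sqrt 5 := Real.sqrt_nonneg 5
  have hφ0 : 0 < φ := by rw [hφ_def]; nlinarith
  have hφ1 : φ < 1 := by rw [hφ_def]; nlinarith
  have hφeq : φ ^ 2 + φ - 1 = 0 := by rw [hφ_def]; nlinarith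
  set A := Real.arcsin φ with hA_def
  have hA0 : 0 < A := Real.arcsin_pos.mpr hφ0
  have hA2 : A < π / 2 := Real.arcsin_lt_pi_div_two.mpr hφ1
  have hsinA : Real.sin A = φ := Real.sin_arcsin (by linarith) hφ1.le
  have hγA : γstar = 2 * A := by rw [hγstar, hA_def, hφ_def]; exact key_gamma
  have hγ0 : 0 < γstar := by linarith
  have hγπ : γstar < π := by linarith
  have hpi : 0 < π := Real.pi_pos
  -- derivative of p at a point γ ∈ (0, π)
  have hderiv : ∀ γ ∈ Set.Ioo (0:ℝ) π,
      HasDerivAt p (m * ((Real.sin (γ/2)) ^ 3 + 2 * (Real.sin (γ/2)) ^ 2 - 1) /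
        (2 * (Real.sin (γ/2)) ^ 2 * (Real.cos (γ/2)) ^ 2)) γ := by
    intro γ hγ
    obtain ⟨hγ1, hγ2⟩ := hγ
    have hs : 0 < Real.sin (γ/2) := Real.sin_pos_of_pos_of_lt_pi (by linarith) (by linarith)
    have hc : 0 < Real.cos (γ/2) := Real.cos_pos_of_mem_Ioo ⟨by linarith, by linarith⟩
    have hsinγ : Real.sin γ = 2 * Real.sin (γ/2) * Real.cos (γ/2) := by
      rw [← Real.sin_two_mul]; ring_nf
    have hcosγ : Real.cos γ = 1 - 2 * (Real.sin (γ/2)) ^ 2 := by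
      have h := Real.cos_two_mul' (γ/2)
      have hpy := Real.sin_sq_add_cos_sq (γ/2)
      have h2 : (2:ℝ) * (γ/2) = γ := by ring
      rw [h2] at h; linarith
    have hsγ : Real.sin γ ≠ 0 := by rw [hsinγ]; positivity
    have hcγ : Real.cos (γ/2) ≠ 0 := ne_of_gt hc
    have h1 : HasDerivAt (fun x => Real.sin x) (Real.cos γ) γ := Real.hasDerivAt_sin γ
    have h2 : HasDerivAt (fun x : ℝ => Real.cos (x/2)) (-Real.sin (γ/2) * (1/2)) γ := by
      have := (Real.hasDerivAt_cos (γ/2)).comp γ ((hasDerivAt_id γ).div_const 2)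
      simpa [Function.comp_def] using this
    have h3 := (hasDerivAt_const γ (2:ℝ)).div h1 hsγ
    have h4 := (hasDerivAt_const γ (1:ℝ)).div h2 hcγ
    have h5 := (h3.add h4).const_mul m
    rw [hpf]
    refine h5.congr_deriv ?_
    rw [hsinγ, hcosγ]
    field_simp
    ring
  -- continuity of p on (0, π)
  have hcont : ContinuousOn p (Set.Ioo 0 π) := by
    rw [hpf]
    apply ContinuousOn.mul continuousOn_const
    apply ContinuousOn.add
    · exact continuousOn_const.div Real.continuous_sin.continuousOn
        (fun x hx => ne_of_gt (Real.sin_pos_of_pos_of_lt_pi hx.1 hx.2))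
    · exact continuousOn_const.div
        ((Real.continuous_cos.comp (continuous_id.div_const 2)).continuousOn)
        (fun x hx => ne_of_gt (Real.cos_pos_of_mem_Ioo ⟨by linarith [hx.1], by linarith [hx.2]⟩))
  -- sign of derivative
  have hsign_neg : ∀ x ∈ interior (Set.Ioc (0:ℝ) γstar), deriv p x < 0 := by
    intro x hx
    rw [interior_Ioc] at hx
    obtain ⟨hx1, hx2⟩ := hx
    have hxπ : x < π := by linarith
    rw [(hderiv x ⟨hx1, hxπ⟩).deriv]
    set s := Real.sin (x/2) with hs_def
    have hs0 : 0 < s := Real.sin_pos_of_pos_of_lt_pi (by linarith) (by linarith)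
    have hc0 : 0 < Real.cos (x/2) := Real.cos_pos_of_mem_Ioo ⟨by linarith, by linarith⟩
    have hsφ : s < φ := by
      rw [hs_def, ← hsinA]
      apply Real.strictMonoOn_sin ⟨by linarith, by linarith⟩ ⟨by linarith, by linarith⟩
      linarith
    apply div_neg_of_neg_of_pos
    · have h1 : s ^ 2 + s - 1 < 0 := by
        nlinarith [mul_pos (sub_pos.mpr hsφ) (show (0:ℝ) < φ + s by linarith)]
      have h2 : s ^ 3 + 2 * s ^ 2 - 1 = (s + 1) * (s ^ 2 + s - 1) := by ring
      have h3 : s ^ 3 + 2 * s ^ 2 - 1 < 0 := by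
        rw [h2]; exact mul_neg_of_pos_of_neg (by linarith) h1
      exact mul_neg_of_pos_of_neg hm h3
    · positivity
  have hsign_pos : ∀ x ∈ interior (Set.Ico γstar π), 0 < deriv p x := by
    intro x hx
    rw [interior_Ico] at hx
    obtain ⟨hx1, hx2⟩ := hx
    have hx0 : 0 < x := by linarith
    rw [(hderiv x ⟨hx0, hx2⟩).deriv]
    set s := Real.sin (x/2) with hs_def
    have hs0 : 0 < s := Real.sin_pos_of_pos_of_lt_pi (by linarith) (by linarith)
    have hc0 : 0 < Real.cos (x/2) := Real.cos_pos_of_mem_Ioo ⟨by linarith, by linarith⟩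
    have hsφ : φ < s := by
      rw [hs_def, ← hsinA]
      apply Real.strictMonoOn_sin ⟨by linarith, by linarith⟩ ⟨by linarith, by linarith⟩
      linarith
    apply div_pos
    · have h1 : 0 < s ^ 2 + s - 1 := by
        nlinarith [mul_pos (sub_pos.mpr hsφ) (show (0:ℝ) < s + φ by linarith)]
      have h2 : s ^ 3 + 2 * s ^ 2 - 1 = (s + 1) * (s ^ 2 + s - 1) := by ring
      have h3 : 0 < s ^ 3 + 2 * s ^ 2 - 1 := by
        rw [h2]; exact mul_pos (by linarith) h1
      exact mul_pos hm h3
    · positivity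
  have hanti : StrictAntiOn p (Set.Ioc 0 γstar) :=
    strictAntiOn_of_deriv_neg (convex_Ioc 0 γstar)
      (hcont.mono (fun x hx => ⟨hx.1, lt_of_le_of_lt hx.2 hγπ⟩)) hsign_neg
  have hmono : StrictMonoOn p (Set.Ico γstar π) :=
    strictMonoOn_of_deriv_pos (convex_Ico γstar π)
      (hcont.mono (fun x hx => ⟨lt_of_lt_of_le hγ0 hx.1, hx.2⟩)) hsign_pos
  refine ⟨hanti, hmono, ?_⟩
  intro γ hγ hne
  rcases lt_or_gt_of_ne hne with h | h
  · exact hanti ⟨hγ.1, h.le⟩ ⟨hγ0, le_refl _⟩ h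
  · exact hmono ⟨le_refl _, hγπ⟩ ⟨h.le, hγ.2⟩ h
end

section
/- For v>0 and x ∈ (1,2), define f_v(x) = x(1 + √(1 + v²/(1−x)²)). Then for every v ∈ [0.56, √3), the function f_v has a unique local (and global) minimum in the open interval (1,2). -/
noncomputable def Gf (v : ℝ) : ℝ → ℝ := fun x => x * (1 + Real.sqrt (1 + v ^ 2 / (1 - x) ^ 2))

lemma tri (p1 q1 p2 q2 : ℝ) : Real.sqrt ((p1+p2)^2+(q1+q2)^2) ≤ Real.sqrt (p1^2+q1^2) + Real.sqrt (p2^2+q2^2) := by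
  have h := norm_add_le (⟨p1,q1⟩ : ℂ) ⟨p2,q2⟩
  simpa [Complex.norm_def, Complex.normSq_apply, sq] using h

lemma gkey (v a p q : ℝ) (hp : p ≠ 0) (hq : q ≠ 0) (hpq : a*p + (1-a)*q ≠ 0) :
    a*(v*(p+1)/p) + (1-a)*(v*(q+1)/q) - v*(a*(p+1)+(1-a)*(q+1))/(a*p+(1-a)*q+1-1)
      = v*a*(1-a)*(p-q)^2 / (p*(q*(a*p+(1-a)*q))) := by
  have h : a*p + (1-a)*q + 1 - 1 = a*p + (1-a)*q := by ring
  rw [h]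
  field_simp
  ring

lemma frw (v x : ℝ) (hx : 1 < x) : Gf v x = x + Real.sqrt (x^2 + (v*x/(x-1))^2) := by
  have hx0 : (0:ℝ) < x := lt_trans one_pos hx
  have hne : x - 1 ≠ 0 := by intro h; nlinarith
  have hne2 : (1:ℝ) - x ≠ 0 := by intro h; nlinarith
  have h1 : x^2 + (v*x/(x-1))^2 = x^2 * (1 + v^2/(1-x)^2) := by field_simp; ring
  show x * (1 + Real.sqrt (1 + v^2/(1-x)^2)) = _
  rw [h1, Real.sqrt_mul (sq_nonneg x), Real.sqrt_sq hx0.le, mul_add, mul_one]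

lemma sconv (v : ℝ) (hv : 0 < v) :
    StrictConvexOn ℝ (Set.Ioi (1:ℝ)) (Gf v) := by
  refine ⟨convex_Ioi 1, ?_⟩
  intro x hx y hy hxy a b ha hb hab
  simp only [smul_eq_mul]
  have hx1 : 1 < x := hx
  have hy1 : 1 < y := hy
  have hu : 1 < a*x + b*y := by nlinarith
  rw [frw v x hx1, frw v y hy1, frw v _ hu]
  have hxm : (0:ℝ) < x - 1 := by linarith
  have hym : (0:ℝ) < y - 1 := by linarith
  have hum : (0:ℝ) < a*x+b*y - 1 := by linarith
  have key : a*(v*x/(x-1)) + b*(v*y/(y-1)) - v*(a*x+b*y)/((a*x+b*y)-1)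
      = v*a*b*((x-1)-(y-1))^2 / ((x-1)*((y-1)*(a*(x-1)+(1-a)*(y-1)))) := by
    have hb' : b = 1 - a := by linarith
    have := gkey v a (x-1) (y-1) (by linarith) (by linarith)
      (by rw [show a*(x-1)+(1-a)*(y-1) = a*x+b*y-1 by rw [hb']; ring]; linarith)
    rw [hb']
    convert this using 3 <;> ring
  have hsq : 0 < ((x-1)-(y-1))^2 := by
    have : x - 1 - (y-1) ≠ 0 := fun h => hxy (by linarith [sub_eq_zero.mp h])
    positivity
  have hcd : 0 < (x-1)*((y-1)*(a*(x-1)+(1-a)*(y-1))) := by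
    have : 0 < a*(x-1)+(1-a)*(y-1) := by nlinarith
    positivity
  set gx := v*x/(x-1) with hgx
  set gy := v*y/(y-1) with hgy
  set gu := v*(a*x+b*y)/((a*x+b*y)-1) with hgu'
  have hgu : gu < a*gx + b*gy := by
    have hpos : 0 < v*a*b*((x-1)-(y-1))^2 / ((x-1)*((y-1)*(a*(x-1)+(1-a)*(y-1)))) := by
      apply div_pos _ hcd
      have := mul_pos (mul_pos (mul_pos hv ha) hb) hsq
      nlinarith
    linarith [key]
  have hgu0 : 0 < gu := by
    rw [hgu']
    exact div_pos (by nlinarith) hum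
  set u := a*x + b*y with hud
  clear_value gx gy gu
  have step1 : Real.sqrt (u^2 + gu^2) < Real.sqrt (u^2 + (a*gx + b*gy)^2) := by
    apply Real.sqrt_lt_sqrt (by positivity)
    nlinarith
  have t := tri (a*x) (a*gx) (b*y) (b*gy)
  have e1 : (a*x)^2 + (a*gx)^2 = a^2 * (x^2+gx^2) := by ring
  have e2 : (b*y)^2 + (b*gy)^2 = b^2 * (y^2+gy^2) := by ring
  have e3 : (a*x+b*y)^2 + (a*gx+b*gy)^2 = u^2 + (a*gx+b*gy)^2 := by rw [hud]
  rw [e1, e2, e3, Real.sqrt_mul (sq_nonneg a), Real.sqrt_mul (sq_nonneg b),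
    Real.sqrt_sq ha.le, Real.sqrt_sq hb.le] at t
  have expand : a*(x + Real.sqrt (x^2+gx^2)) + b*(y + Real.sqrt (y^2+gy^2))
      = (a*x+b*y) + (a*Real.sqrt (x^2+gx^2) + b*Real.sqrt (y^2+gy^2)) := by ring
  rw [expand, ← hud]
  linarith [t, step1]

lemma dlem (v : ℝ) (hv : 0 < v) (hv3 : v^2 < 3) :
    ∃ D, 0 < D ∧ HasDerivAt (Gf v) D 2 := by
  have h0 : HasDerivAt (fun x : ℝ => 1 - x) (-1) 2 := (hasDerivAt_id 2).const_sub 1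
  have h1 := h0.pow 2
  have hne : ((fun x : ℝ => (1-x)^2) 2) ≠ 0 := by norm_num
  have h2 := (hasDerivAt_const (2:ℝ) (v^2)).div h1 hne
  have h3 := h2.const_add 1
  have hne2 : ((fun x : ℝ => 1 + v^2/(1-x)^2) 2) ≠ 0 := by simp; positivity
  have h4 := h3.sqrt hne2
  have h5 := (hasDerivAt_id 2).mul (h4.const_add 1)
  refine ⟨_, ?_, h5⟩
  have hs2 : (1:ℝ) + v^2/(1-2)^2 = 1 + v^2 := by norm_num
  simp only [Pi.div_apply, Pi.pow_apply, hs2]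
  set s := Real.sqrt (1+v^2) with hs
  have hs0 : 0 < s := Real.sqrt_pos.mpr (by positivity)
  have hssq : s^2 = 1 + v^2 := Real.sq_sqrt (by positivity)
  have hslt : s < 2 := by
    rw [hs, show (2:ℝ) = Real.sqrt 4 by rw [show (4:ℝ) = 2^2 by norm_num, Real.sqrt_sq]; norm_num]
    exact Real.sqrt_lt_sqrt (by positivity) (by linarith)
  have : (0:ℝ) < 1 * (1 + s) + 2 * ((0 * (1-2)^2 - v^2 * (2*(1-2)^(2-1)*(-1)))/((1-2)^2)^2 / (2*s)) := by
    have hexp : 1 * (1 + s) + 2 * ((0 * (1-2)^2 - v^2 * (2*(1-2)^(2-1)*(-1)))/((1-2)^2)^2 / (2*s)) = 1 + s - 2*v^2/s := by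
      norm_num; ring
    rw [hexp]
    rw [show 1 + s - 2*v^2/s = (s + s^2 - 2*v^2)/s by field_simp]
    apply div_pos _ hs0
    nlinarith
  convert this using 2
  simp

lemma main (v : ℝ) (hv0 : 0 < v) (hv3 : v^2 < 3) :
    ∃! x, x ∈ Set.Ioo (1:ℝ) 2 ∧ ∀ y ∈ Set.Ioo (1:ℝ) 2, y ≠ x → Gf v x < Gf v y := by
  have hv2 : v < 2 := by nlinarith
  set A := 1 + v/7 with hA
  have hv7 : 0 < v/7 := by positivity
  have hA1 : 1 < A := by rw [hA]; linarith
  have hA2 : A < 2 := by rw [hA]; linarith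
  have hGA : 8 < Gf v A := by
    have e : 1 + v^2/(1-A)^2 = 50 := by
      rw [hA]
      rw [show (1 - (1+v/7))^2 = v^2/49 by ring]
      rw [div_div_eq_mul_div, mul_comm, mul_div_assoc, div_self (by positivity : v^2 ≠ 0)]
      norm_num
    have s50 : (7:ℝ) < Real.sqrt 50 := by
      rw [show (7:ℝ) = Real.sqrt 49 by
        rw [show (49:ℝ) = 7^2 by norm_num, Real.sqrt_sq]; norm_num]
      exact Real.sqrt_lt_sqrt (by norm_num) (by norm_num)
    show 8 < A * (1 + Real.sqrt (1 + v^2/(1-A)^2))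
    rw [e]
    nlinarith [s50, hA1]
  clear_value A
  have hs2 : Real.sqrt (1+v^2) < 2 := by
    rw [show (2:ℝ) = Real.sqrt 4 by rw [show (4:ℝ) = 2^2 by norm_num, Real.sqrt_sq]; norm_num]
    exact Real.sqrt_lt_sqrt (by positivity) (by linarith)
  have hG2 : Gf v 2 < 6 := by
    show 2 * (1 + Real.sqrt (1 + v^2/(1-2)^2)) < 6
    rw [show (1:ℝ) + v^2/(1-2)^2 = 1+v^2 by norm_num]
    linarith [Real.sqrt_nonneg (1+v^2)]
  have hcont : ContinuousOn (Gf v) (Set.Icc A 2) := by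
    show ContinuousOn (fun x => x * (1 + Real.sqrt (1 + v^2/(1-x)^2))) _
    apply ContinuousOn.mul continuousOn_id
    apply ContinuousOn.add continuousOn_const
    apply ContinuousOn.sqrt
    apply ContinuousOn.add continuousOn_const
    apply ContinuousOn.div continuousOn_const (by fun_prop)
    intro x hx
    have hx1 : 1 < x := lt_of_lt_of_le hA1 hx.1
    have : (1:ℝ) - x ≠ 0 := by intro h; nlinarith
    positivity
  obtain ⟨w, hwmem, hwmin⟩ := isCompact_Icc.exists_isMinOn
    ⟨2, by constructor <;> linarith⟩ hcont
  have hwmin' : ∀ z ∈ Set.Icc A 2, Gf v w ≤ Gf v z := fun z hz => hwmin hz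
  obtain ⟨D, hD, hder⟩ := dlem v hv0 hv3
  have hT := hasDerivAt_iff_tendsto_slope.mp hder
  have hev : ∀ᶠ z in nhdsWithin 2 {(2:ℝ)}ᶜ, 0 < slope (Gf v) 2 z :=
    hT.eventually (eventually_gt_nhds hD)
  have hle : nhdsWithin (2:ℝ) (Set.Iio 2) ≤ nhdsWithin 2 {(2:ℝ)}ᶜ :=
    nhdsWithin_mono 2 (fun z hz => ne_of_lt hz)
  have hmem2 : Set.Ioo A 2 ∈ nhdsWithin (2:ℝ) (Set.Iio 2) :=
    Ioo_mem_nhdsLT_of_mem ⟨hA2, le_refl 2⟩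
  obtain ⟨x₀, hsl, hx₀⟩ :=
    ((hev.filter_mono hle).and (Filter.eventually_of_mem hmem2 (fun z hz => hz))).exists
  have hnum : Gf v x₀ < Gf v 2 := by
    rw [slope_def_field] at hsl
    rcases div_pos_iff.mp hsl with ⟨h1, h2⟩ | ⟨h1, h2⟩
    · linarith [hx₀.2]
    · linarith
  have hx₀w : Gf v w ≤ Gf v x₀ := hwmin' x₀ ⟨hx₀.1.le, hx₀.2.le⟩
  have hw2 : w ≠ 2 := by
    intro h
    have := hwmin' x₀ ⟨hx₀.1.le, hx₀.2.le⟩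
    rw [h] at this
    linarith
  have hwA : w ≠ A := by
    intro h
    have h2mem : (2:ℝ) ∈ Set.Icc A 2 := ⟨hA2.le, le_refl 2⟩
    have := hwmin' 2 h2mem
    rw [h] at this
    linarith
  have hw1 : 1 < w := lt_of_lt_of_le hA1 hwmem.1
  have hwlt2 : w < 2 := lt_of_le_of_ne hwmem.2 hw2
  have hAw : A < w := lt_of_le_of_ne hwmem.1 (Ne.symm hwA)
  have hcx := sconv v hv0
  have hP : ∀ y ∈ Set.Ioo (1:ℝ) 2, y ≠ w → Gf v w < Gf v y := by
    intro y hy hyw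
    by_cases hcase : A ≤ y
    · by_contra hcon
      push_neg at hcon
      have hm : (1/2:ℝ)*y + (1/2:ℝ)*w ∈ Set.Icc A 2 := by
        constructor
        · linarith [hwmem.1, hcase]
        · linarith [hy.2, hwmem.2]
      have hky := hcx.2 (show y ∈ Set.Ioi (1:ℝ) from hy.1)
        (show w ∈ Set.Ioi (1:ℝ) from hw1) hyw
        (by norm_num : (0:ℝ) < 1/2) (by norm_num : (0:ℝ) < 1/2) (by norm_num)
      simp only [smul_eq_mul] at hky
      have h2 := hwmin' _ hm
      linarith
    · push_neg at hcase
      have hyw' : y < w := lt_trans hcase hAw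
      set θ := (w - A)/(w - y) with hθ
      have hwy : 0 < w - y := by linarith
      have hθ0 : 0 < θ := div_pos (by linarith) hwy
      have hθ1 : 0 < 1 - θ := by
        have : (w-A)/(w-y) < 1 := (div_lt_one hwy).mpr (by linarith)
        rw [hθ]; linarith
      have hcomb : θ*y + (1-θ)*w = A := by
        rw [hθ]; field_simp; ring
      have hkey := hcx.2 (show y ∈ Set.Ioi (1:ℝ) from hy.1)
        (show w ∈ Set.Ioi (1:ℝ) from hw1) (ne_of_lt hyw') hθ0 hθ1 (by ring)
      simp only [smul_eq_mul] at hkey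
      rw [hcomb] at hkey
      have hwA' : Gf v w ≤ Gf v A := hwmin' A ⟨le_refl A, hA2.le⟩
      nlinarith [hkey, hwA', hθ0, hθ1]
  refine ⟨w, ⟨⟨hw1, hwlt2⟩, hP⟩, ?_⟩
  rintro z ⟨hz, hzmin⟩
  by_contra hne
  have l1 : Gf v z < Gf v w := hzmin w ⟨hw1, hwlt2⟩ (fun h => hne (h ▸ rfl))
  have l2 : Gf v w < Gf v z := hP z hz hne
  linarith

theorem stmt_10 (v : ℝ) (hv : v ∈ Set.Ico (0.56 : ℝ) (Real.sqrt 3))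
    (f : ℝ → ℝ)
    (hf : ∀ x, f x = x * (1 + Real.sqrt (1 + v ^ 2 / (1 - x) ^ 2))) :
    ∃! x, x ∈ Set.Ioo (1 : ℝ) 2 ∧
      ∀ y ∈ Set.Ioo (1 : ℝ) 2, y ≠ x → f x < f y := by
  obtain ⟨hv05, hvs⟩ := hv
  have hv0 : 0 < v := lt_of_lt_of_le (by norm_num) hv05
  have hv3 : v^2 < 3 := by
    nlinarith [Real.sq_sqrt (show (0:ℝ) ≤ 3 by norm_num), Real.sqrt_nonneg 3]
  simp only [hf]
  exact main v hv0 hv3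
end

section
/- Let ABC be a triangle and let m_A, m_B, m_C be the midpoints of BC, CA, AB. Suppose X, Y, Z are points on the boundary of ABC such that two of them lie on the polyline m_C B ∪ B m_A (the part of the boundary around vertex B between midpoints m_C and m_A). Then area(XYZ) ≤ area(ABC)/2. -/
open MeasureTheory Pointwise

noncomputable section
abbrev E2 := EuclideanSpace ℝ (Fin 2)

lemma card_finrank : Fintype.card (Fin 2) = Module.finrank ℝ E2 := by simp

lemma aux_det (u v : E2) (hLI : LinearIndependent ℝ ![u, v]) (p q r s : ℝ) :
    LinearMap.det ((basisOfLinearIndependentOfCardEqFinrank hLI card_finrank).constr ℝ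
      ![p • u + q • v, r • u + s • v]) = p * s - q * r := by
  set b := basisOfLinearIndependentOfCardEqFinrank hLI card_finrank with hb
  have hb0 : b 0 = u := by rw [hb, coe_basisOfLinearIndependentOfCardEqFinrank]; rfl
  have hb1 : b 1 = v := by rw [hb, coe_basisOfLinearIndependentOfCardEqFinrank]; rfl
  set L := b.constr ℝ ![p • u + q • v, r • u + s • v] with hL
  have hM : LinearMap.toMatrix b b L = !![p, r; q, s] := by
    ext i j
    rw [LinearMap.toMatrix_apply, hL, Module.Basis.constr_basis]
    fin_cases i <;> fin_cases j <;>
      simp [← hb0, ← hb1, map_add, _root_.map_smul, Module.Basis.repr_self]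
  rw [← LinearMap.det_toMatrix b, hM, Matrix.det_fin_two_of]; ring

-- coordinates for a point on the corner polyline
lemma corner_coords (A B C X : E2)
    (hX : X ∈ segment ℝ (midpoint ℝ A B) B ∪ segment ℝ B (midpoint ℝ B C)) :
    ∃ xb xc : ℝ, X - A = xb • (B - A) + xc • (C - A) ∧
      1/2 ≤ xb ∧ 0 ≤ xc ∧ xb + xc ≤ 1 := by
  rcases hX with hX | hX
  · obtain ⟨s, t, hs, ht, hst, hX⟩ := hX
    refine ⟨s/2 + t, 0, ?_, by linarith, le_refl _, by linarith⟩
    rw [← hX, midpoint_eq_smul_add]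
    match_scalars <;> (try simp only [invOf_eq_inv]) <;> field_simp <;> linarith
  · obtain ⟨s, t, hs, ht, hst, hX⟩ := hX
    refine ⟨s + t/2, t/2, ?_, by linarith, by linarith, by linarith⟩
    rw [← hX, midpoint_eq_smul_add]
    match_scalars <;> (try simp only [invOf_eq_inv]) <;> field_simp <;> linarith

lemma hull_coords (A B C Y : E2) (hY : Y ∈ convexHull ℝ ({A, B, C} : Set E2)) :
    ∃ yb yc : ℝ, Y - A = yb • (B - A) + yc • (C - A) ∧
      0 ≤ yb ∧ 0 ≤ yc ∧ yb + yc ≤ 1 := by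
  rw [convexHull_insert ⟨B, by simp⟩, mem_convexJoin] at hY
  obtain ⟨a, ha, z, hz, hYz⟩ := hY
  rw [Set.mem_singleton_iff] at ha
  subst ha
  rw [convexHull_pair] at hz
  obtain ⟨r, w, hr, hw, hrw, hz⟩ := hz
  obtain ⟨p, q, hp, hq, hpq, hY⟩ := hYz
  refine ⟨q * r, q * w, ?_, by positivity, by positivity, by nlinarith⟩
  rw [← hY, ← hz]
  match_scalars <;> nlinarith [hpq, hrw]

lemma abs_det_bound (xb xc zb zc yb yc : ℝ)
    (hxb : 1/2 ≤ xb) (hxc : 0 ≤ xc) (hxs : xb + xc ≤ 1)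
    (hzb : 1/2 ≤ zb) (hzc : 0 ≤ zc) (hzs : zb + zc ≤ 1)
    (hyb : 0 ≤ yb) (hyc : 0 ≤ yc) (hys : yb + yc ≤ 1) :
    |(yb - xb) * (zc - xc) - (yc - xc) * (zb - xb)| ≤ 1/2 := by
  rw [abs_le]
  constructor <;>
    nlinarith [mul_nonneg hyb hyc, mul_nonneg hxc hzc, mul_nonneg hyc hzc,
      mul_nonneg hyc hxc, mul_nonneg hyb hzc, mul_nonneg hyb hxc]


theorem stmt_16 (A B C X Y Z : EuclideanSpace ℝ (Fin 2))
    (hXb : X ∈ frontier (convexHull ℝ {A, B, C}))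
    (hYb : Y ∈ frontier (convexHull ℝ {A, B, C}))
    (hZb : Z ∈ frontier (convexHull ℝ {A, B, C}))
    (hX : X ∈ segment ℝ (midpoint ℝ A B) B ∪ segment ℝ B (midpoint ℝ B C))
    (hZ : Z ∈ segment ℝ (midpoint ℝ A B) B ∪ segment ℝ B (midpoint ℝ B C)) :
    volume (convexHull ℝ {X, Y, Z} : Set (EuclideanSpace ℝ (Fin 2))) ≤
      volume (convexHull ℝ {A, B, C} : Set (EuclideanSpace ℝ (Fin 2))) / 2 := by
  set T : Set E2 := convexHull ℝ {A, B, C} with hT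
  have hfin : ({A, B, C} : Set E2).Finite := by
    exact Set.toFinite _
  have hclosed : IsClosed T := hfin.isClosed_convexHull ℝ
  have hYT : Y ∈ T := by
    have := frontier_subset_closure hYb
    rwa [hclosed.closure_eq] at this
  obtain ⟨xb, xc, hXc, hxb, hxc, hxs⟩ := corner_coords A B C X hX
  obtain ⟨zb, zc, hZc, hzb, hzc, hzs⟩ := corner_coords A B C Z hZ
  obtain ⟨yb, yc, hYc, hyb, hyc, hys⟩ := hull_coords A B C Y hYT
  by_cases hLI : LinearIndependent ℝ ![B - A, C - A]
  · -- nondegenerate case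
    set b := basisOfLinearIndependentOfCardEqFinrank hLI card_finrank with hb
    set L := b.constr ℝ
        ![(yb - xb) • (B - A) + (yc - xc) • (C - A),
          (zb - xb) • (B - A) + (zc - xc) • (C - A)] with hL
    have hdet : LinearMap.det L = (yb - xb) * (zc - xc) - (yc - xc) * (zb - xb) :=
      aux_det _ _ hLI _ _ _ _
    have hb0 : b 0 = B - A := by rw [hb, coe_basisOfLinearIndependentOfCardEqFinrank]; rfl
    have hb1 : b 1 = C - A := by rw [hb, coe_basisOfLinearIndependentOfCardEqFinrank]; rfl
    have hLu : L (B - A) = Y - X := by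
      rw [← hb0, hL, Module.Basis.constr_basis]
      simp only [Matrix.cons_val_zero]
      rw [show (yb - xb) • (B - A) + (yc - xc) • (C - A)
          = (yb • (B - A) + yc • (C - A)) - (xb • (B - A) + xc • (C - A)) by module,
        ← hXc, ← hYc]
      abel
    have hLv : L (C - A) = Z - X := by
      rw [← hb1, hL, Module.Basis.constr_basis]
      simp only [Matrix.cons_val_one, Matrix.head_cons, Matrix.cons_val_zero]
      rw [show (zb - xb) • (B - A) + (zc - xc) • (C - A)
          = (zb • (B - A) + zc • (C - A)) - (xb • (B - A) + xc • (C - A)) by module,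
        ← hXc, ← hZc]
      abel
    have hmk : ∀ p : E2, (fun p : E2 => L (p - A) + X) p
        = L (p -ᵥ A) +ᵥ (fun p : E2 => L (p - A) + X) A := by
      intro p
      simp [vsub_eq_sub, vadd_eq_add, sub_self, map_zero]
    set f : E2 →ᵃ[ℝ] E2 := AffineMap.mk' (fun p : E2 => L (p - A) + X) L A hmk with hf
    have hfA : f A = X := by simp [hf, AffineMap.coe_mk', sub_self, map_zero]
    have hfB : f B = Y := by
      show L (B - A) + X = Y
      rw [hLu]; abel
    have hfC : f C = Z := by
      show L (C - A) + X = Z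
      rw [hLv]; abel
    have himg : f '' T = (convexHull ℝ {X, Y, Z} : Set E2) := by
      rw [hT, AffineMap.image_convexHull]
      congr 1
      rw [Set.image_insert_eq, Set.image_insert_eq, Set.image_singleton, hfA, hfB, hfC]
    have hvol : volume (convexHull ℝ {X, Y, Z} : Set E2)
        = ENNReal.ofReal |LinearMap.det L| * volume T := by
      rw [← himg]
      have h1 : f '' T = (fun w => X + w) '' (L '' ((fun p => -A + p) '' T)) := by
        rw [Set.image_image, Set.image_image]
        refine Set.image_congr fun p _ => ?_
        show L (p - A) + X = X + L (-A + p)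
        rw [show -A + p = p - A by abel]; abel
      rw [h1]
      have h2 : volume ((fun w : E2 => X + w) '' (L '' ((fun p : E2 => -A + p) '' T)))
          = volume (L '' ((fun p : E2 => -A + p) '' T)) := by
        simp_rw [← vadd_eq_add, Set.image_vadd, measure_vadd]
      rw [h2, Measure.addHaar_image_linearMap]
      have h3 : volume ((fun p : E2 => -A + p) '' T) = volume T := by
        simp_rw [← vadd_eq_add, Set.image_vadd, measure_vadd]
      rw [h3]
    have habs : |LinearMap.det L| ≤ 1/2 := by
      rw [hdet]
      exact abs_det_bound xb xc zb zc yb yc hxb hxc hxs hzb hzc hzs hyb hyc hys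
    rw [hvol]
    calc ENNReal.ofReal |LinearMap.det L| * volume T
        ≤ ENNReal.ofReal (1/2) * volume T :=
          mul_le_mul_left (ENNReal.ofReal_le_ofReal habs) _
      _ = volume T / 2 := by
          have h12 : ENNReal.ofReal (1/2) = 1/2 := by
            rw [ENNReal.ofReal_div_of_pos (by norm_num)]
            norm_num
          rw [h12, div_eq_mul_inv, div_eq_mul_inv, one_mul, mul_comm]
  · -- degenerate case
    have hspan : affineSpan ℝ ({A, B, C} : Set E2) ≠ ⊤ := by
      intro htop
      apply hLI
      have hv : vectorSpan ℝ ({A, B, C} : Set E2) = ⊤ :=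
        AffineSubspace.vectorSpan_eq_top_of_affineSpan_eq_top ℝ E2 E2 htop
      have hle : vectorSpan ℝ ({A, B, C} : Set E2)
          ≤ Submodule.span ℝ {B - A, C - A} := by
        rw [vectorSpan_eq_span_vsub_set_right ℝ (show A ∈ ({A, B, C} : Set E2) by simp)]
        refine Submodule.span_le.2 ?_
        rintro x ⟨p, hp, rfl⟩
        simp only [Set.mem_insert_iff, Set.mem_singleton_iff] at hp
        rcases hp with rfl | rfl | rfl
        · simp [vsub_eq_sub]
        · exact Submodule.subset_span (by simp [vsub_eq_sub])
        · exact Submodule.subset_span (by simp [vsub_eq_sub])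
      have hst : Submodule.span ℝ ({B - A, C - A} : Set E2) = ⊤ :=
        top_le_iff.1 (hv ▸ hle)
      rw [linearIndependent_iff_card_eq_finrank_span]
      rw [show Set.range ![B - A, C - A] = {B - A, C - A} by
        simp [Matrix.range_cons, Matrix.range_empty, Set.pair_comm]]
      rw [Set.finrank, hst]
      simp
    have hsub : (convexHull ℝ {X, Y, Z} : Set E2) ⊆ (affineSpan ℝ ({A, B, C} : Set E2) : Set E2) := by
      have hXT : X ∈ T := by
        have := frontier_subset_closure hXb
        rwa [hclosed.closure_eq] at this
      have hZT : Z ∈ T := by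
        have := frontier_subset_closure hZb
        rwa [hclosed.closure_eq] at this
      have : ({X, Y, Z} : Set E2) ⊆ T := by
        rintro p (rfl | rfl | rfl) <;> assumption
      refine (convexHull_min this (convex_convexHull ℝ _)).trans ?_
      exact convexHull_subset_affineSpan _
    have h0 : volume (convexHull ℝ {X, Y, Z} : Set E2) = 0 := by
      refine le_antisymm ?_ zero_le
      calc volume (convexHull ℝ {X, Y, Z} : Set E2)
          ≤ volume (affineSpan ℝ ({A, B, C} : Set E2) : Set E2) := measure_mono hsub
        _ = 0 := Measure.addHaar_affineSubspace _ _ hspan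
    rw [h0]
    exact zero_le
end
end
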